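/- If g : ℝ^n → Cl_n is a left monogenic polynomial homogeneous of degree k and a ∈ Pin(n), then the function u ↦ ã g(a u ã) is again left monogenic and homogeneous of degree k; i.e., l_ã : M_k → M_k, f(u) ↦ ã f(a u ã), is a right-Cl_n-linear isomorphism. -/

import Mathlib

open scoped RealInnerProductSpace
noncomputable section

/-- The quadratic form `x ↦ -‖x‖²` on `ℝⁿ`. -/
def Qn (n : ℕ) : QuadraticForm ℝ (EuclideanSpace ℝ (Fin n)) :=
  -(LinearMap.BilinMap.toQuadraticMap (innerₗ (EuclideanSpace ℝ (Fin n))))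

/-- The Clifford algebra `Cl_n` generated from `ℝⁿ` by the relation `x² = -‖x‖²`. -/
abbrev Cl (n : ℕ) := CliffordAlgebra (Qn n)

/-- The canonical embedding `ℝⁿ ⊆ Cl_n`. -/
def ιn (n : ℕ) : EuclideanSpace ℝ (Fin n) →ₗ[ℝ] Cl n := CliffordAlgebra.ι (Qn n)

/-- Formal `Cl_n`-valued polynomials on `ℝⁿ`: finitely supported families of coefficients
indexed by multi-indices. -/
abbrev PolyC (n : ℕ) := (Fin n →₀ ℕ) →₀ Cl n

/-- Evaluation of a formal polynomial at `x ∈ ℝⁿ`. -/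
def evalP {n : ℕ} (p : PolyC n) (x : EuclideanSpace ℝ (Fin n)) : Cl n :=
  p.sum fun m c => (∏ i : Fin n, x i ^ m i) • c

/-- Formal partial derivative `∂/∂u_j`. -/
def pdP {n : ℕ} (j : Fin n) (p : PolyC n) : PolyC n :=
  p.sum fun m c => Finsupp.single (m - Finsupp.single j 1) (((m j : ℝ)) • c)

/-- The formal Dirac operator `D = Σ_j e_j ∂/∂u_j` on `Cl_n`-valued polynomials. -/
def diracP {n : ℕ} (p : PolyC n) : PolyC n :=
  ∑ j : Fin n,
    Finsupp.mapRange (fun c => ιn n (EuclideanSpace.single j 1) * c) (mul_zero _) (pdP j p)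

/-- A formal polynomial is homogeneous of degree `k`. -/
def IsHomogP {n : ℕ} (k : ℕ) (p : PolyC n) : Prop :=
  ∀ m ∈ p.support, (m.sum fun _ v => v) = k

/-- `Pin(n)`: the set of products of unit vectors of `ℝⁿ` inside `Cl_n`. -/
def IsPin (n : ℕ) (a : Cl n) : Prop :=
  ∃ l : List (EuclideanSpace ℝ (Fin n)),
    (∀ y ∈ l, ‖y‖ = 1) ∧ a = (l.map fun y => ιn n y).prod

/-- A function `ℝⁿ → Cl_n` is a left monogenic polynomial homogeneous of degree `k`
(an element of `M_k`). -/
def IsMonogenicPoly (n k : ℕ) (g : EuclideanSpace ℝ (Fin n) → Cl n) : Prop :=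
  ∃ p : PolyC n, g = evalP p ∧ diracP p = 0 ∧ IsHomogP k p

/-!
Write `g` as a formal polynomial `p`. Substituting the linear forms `xᵢ = (O u)ᵢ` and
multiplying all coefficients by `ã` produces a formal polynomial for `u ↦ ã g(O u)` of the same
degree. By the chain rule its Dirac derivative is `∑ᵢ ι(O⁻¹eᵢ) ã (∂ᵢp)(O u)`. Since `a` is a product
of unit vectors, `ã a = a ã = ε = ±1`, so `a ι(w) ã = ι(O w)` gives `ι(O⁻¹v) ã = ε ã ι(v)`, and the
Dirac derivative becomes `ε ã (Dp)(O u) = 0`. The inverse `h ↦ (u ↦ ε a h(O⁻¹u))` has the same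
shape, with `a` in place of `ã`.
-/

open MvPolynomial CliffordAlgebra

namespace CliffordAlgebra

variable {R M : Type*} [CommRing R] [AddCommGroup M] [Module R M] {Q : QuadraticForm R M}

theorem prod_map_ι_mul_reverse (l : List M) :
    (l.map (ι Q)).prod * reverse (l.map (ι Q)).prod = algebraMap R _ (l.map Q).prod := by
  induction l with
  | nil => simp
  | cons y t ih =>
    set P := (t.map (ι Q)).prod
    calc ι Q y * P * reverse (ι Q y * P) = ι Q y * (P * reverse P) * ι Q y := by
          rw [reverse.map_mul, reverse_ι]; noncomm_ring
      _ = algebraMap R _ ((y :: t).map Q).prod := by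
          rw [ih, ← Algebra.commutes, mul_assoc, ι_sq_scalar, ← map_mul, List.map_cons,
            List.prod_cons, mul_comm]

theorem reverse_mul_prod_map_ι (l : List M) :
    reverse (l.map (ι Q)).prod * (l.map (ι Q)).prod = algebraMap R _ (l.map Q).prod := by
  induction l with
  | nil => simp
  | cons y t ih =>
    set P := (t.map (ι Q)).prod
    calc reverse (ι Q y * P) * (ι Q y * P) = reverse P * (ι Q y * ι Q y) * P := by
          rw [reverse.map_mul, reverse_ι]; noncomm_ring
      _ = algebraMap R _ ((y :: t).map Q).prod := by
          rw [ι_sq_scalar, ← Algebra.commutes, mul_assoc, ih, ← map_mul, List.map_cons,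
            List.prod_cons]

end CliffordAlgebra

theorem MvPolynomial.pderiv_bind₁ {σ τ R : Type*} [CommSemiring R] [Fintype σ]
    (f : σ → MvPolynomial τ R) (j : τ) (q : MvPolynomial σ R) :
    pderiv j (bind₁ f q) = ∑ i, pderiv j (f i) * bind₁ f (pderiv i q) := by
  classical
  induction q using MvPolynomial.induction_on with
  | C r => simp
  | add p q hp hq => simp only [map_add, hp, hq, mul_add, Finset.sum_add_distrib]
  | mul_X p s hp =>
    simp only [map_mul, bind₁_X_right, Derivation.leibniz, pderiv_X, hp, smul_eq_mul, map_add,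
      mul_add, Finset.sum_add_distrib, Finset.mul_sum, Pi.single_apply, map_zero,
      apply_ite (bind₁ f), mul_ite, mul_one, mul_zero, Finset.sum_ite_eq, Finset.mem_univ,
      if_true]
    exact congrArg₂ (· + ·) (mul_comm _ _) (Finset.sum_congr rfl fun i _ => mul_left_comm _ _ _)

section PolySMul

variable {σ R M : Type*} [CommSemiring R] [AddCommMonoid M] [Module R M]

def polySMul : MvPolynomial σ R →ₗ[R] M →ₗ[R] (σ →₀ ℕ) →₀ M :=
  LinearMap.mk₂ R
    (fun q c => Finsupp.mapRange (· • c) (zero_smul R c) (AddMonoidAlgebra.coeff q))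
    (fun _ _ _ => by ext; simp [add_smul]) (fun _ _ _ => by ext; simp [mul_smul])
    (fun _ _ _ => by ext; simp) (fun _ _ _ => by ext; exact smul_comm _ _ _)

theorem polySMul_apply (q : MvPolynomial σ R) (c : M) (m : σ →₀ ℕ) :
    polySMul q c m = coeff m q • c := rfl

theorem polySMul_monomial (m : σ →₀ ℕ) (r : R) (c : M) :
    polySMul (monomial m r) c = Finsupp.single m (r • c) :=
  Finsupp.mapRange_single (hf := zero_smul R c)

theorem single_eq_polySMul (m : σ →₀ ℕ) (c : M) :
    Finsupp.single m c = polySMul (monomial m (1 : R)) c := by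
  rw [polySMul_monomial, one_smul]

theorem polySMul_C_mul (r : R) (q : MvPolynomial σ R) (c : M) :
    polySMul (C r * q) c = polySMul q (r • c) := by
  ext m
  rw [polySMul_apply, polySMul_apply, coeff_C_mul, mul_comm, mul_smul]

theorem support_polySMul_subset (q : MvPolynomial σ R) (c : M) :
    (polySMul q c).support ⊆ q.support :=
  Finsupp.support_mapRange (hf := zero_smul R c)

end PolySMul

section Substitution

variable {σ τ R A : Type*} [CommSemiring R] [Semiring A] [Algebra R A]

/-- Formal counterpart of `g ↦ (u ↦ b * g (f u))` for a polynomial substitution `f`. -/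
def substMul (f : σ → MvPolynomial τ R) (b : A) : ((σ →₀ ℕ) →₀ A) →ₗ[R] (τ →₀ ℕ) →₀ A :=
  Finsupp.lsum R fun m => (polySMul (bind₁ f (monomial m 1))).comp (LinearMap.mulLeft R b)

theorem substMul_polySMul (f : σ → MvPolynomial τ R) (b : A) (q : MvPolynomial σ R) (c : A) :
    substMul f b (polySMul q c) = polySMul (bind₁ f q) (b * c) := by
  induction q using MvPolynomial.induction_on' with
  | monomial m r =>
    rw [polySMul_monomial, substMul, Finsupp.lsum_single, LinearMap.comp_apply,
      LinearMap.mulLeft_apply, mul_smul_comm, LinearMap.map_smul, ← LinearMap.smul_apply,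
      ← map_smul, ← map_smul, smul_monomial, smul_eq_mul, mul_one]
  | add p q hp hq => rw [map_add, LinearMap.add_apply, map_add, hp, hq, map_add, map_add,
      LinearMap.add_apply]

end Substitution

section Monogenic

variable {n : ℕ}

theorem isHomogP_iff_mem_supported {k : ℕ} {p : PolyC n} :
    IsHomogP k p ↔ p ∈ Finsupp.supported (Cl n) ℝ {m | m.degree = k} := Iff.rfl

theorem isHomogP_polySMul {k : ℕ} {q : MvPolynomial (Fin n) ℝ} (hq : q.IsHomogeneous k)
    (c : Cl n) : IsHomogP k (polySMul q c) := fun m hm => by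
  change m.degree = k
  rw [Finsupp.degree_eq_weight_one]
  exact hq (mem_support_iff.1 (support_polySMul_subset q c hm))

theorem evalP_add (p p' : PolyC n) (x : EuclideanSpace ℝ (Fin n)) :
    evalP (p + p') x = evalP p x + evalP p' x :=
  Finsupp.sum_add_index' (fun _ => smul_zero _) fun _ _ _ => smul_add _ _ _

theorem evalP_polySMul (q : MvPolynomial (Fin n) ℝ) (c : Cl n) (x : EuclideanSpace ℝ (Fin n)) :
    evalP (polySMul q c) x = aeval (fun i => x i) q • c := by
  induction q using MvPolynomial.induction_on' with
  | monomial m r =>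
    rw [polySMul_monomial, evalP, Finsupp.sum_single_index (by rw [smul_zero]), aeval_monomial,
      Finsupp.prod_pow, smul_smul, Algebra.algebraMap_self, RingHom.id_apply, mul_comm]
  | add p q hp hq => rw [map_add, LinearMap.add_apply, evalP_add, hp, hq, map_add, add_smul]

theorem pdP_add (j : Fin n) (p p' : PolyC n) : pdP j (p + p') = pdP j p + pdP j p' :=
  Finsupp.sum_add_index' (fun _ => by simp) fun _ _ _ => by rw [smul_add, Finsupp.single_add]

theorem pdP_polySMul (j : Fin n) (q : MvPolynomial (Fin n) ℝ) (c : Cl n) :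
    pdP j (polySMul q c) = polySMul (pderiv j q) c := by
  induction q using MvPolynomial.induction_on' with
  | monomial m r =>
    rw [polySMul_monomial, pdP, Finsupp.sum_single_index (by simp), pderiv_monomial,
      polySMul_monomial, smul_smul, mul_comm]
  | add p q hp hq => rw [map_add, LinearMap.add_apply, pdP_add, hp, hq, map_add, map_add,
      LinearMap.add_apply]

theorem diracP_zero : diracP (0 : PolyC n) = 0 := by
  simp [diracP, pdP]

theorem diracP_add (p p' : PolyC n) : diracP (p + p') = diracP p + diracP p' := by
  simp only [diracP, pdP_add, Finsupp.mapRange_add (mul_add _), Finset.sum_add_distrib]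

theorem diracP_polySMul (q : MvPolynomial (Fin n) ℝ) (c : Cl n) :
    diracP (polySMul q c) =
      ∑ j, polySMul (pderiv j q) (ιn n (EuclideanSpace.single j 1) * c) := by
  refine Finset.sum_congr rfl fun j _ => ?_
  ext m
  simp only [pdP_polySMul, Finsupp.mapRange_apply, polySMul_apply, mul_smul_comm]

def linPoly (v : EuclideanSpace ℝ (Fin n)) : MvPolynomial (Fin n) ℝ :=
  ∑ j, C (v j) * X j

theorem pderiv_linPoly (v : EuclideanSpace ℝ (Fin n)) (j : Fin n) :
    pderiv j (linPoly v) = C (v j) := by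
  classical
  simp [linPoly, pderiv_X, Pi.single_apply]

theorem aeval_linPoly (v u : EuclideanSpace ℝ (Fin n)) :
    aeval (fun j => u j) (linPoly v) = ⟪v, u⟫ := by
  simp [linPoly, PiLp.inner_apply, mul_comm]

theorem isHomogeneous_linPoly (v : EuclideanSpace ℝ (Fin n)) : (linPoly v).IsHomogeneous 1 :=
  IsHomogeneous.sum _ _ _ fun j _ => (isHomogeneous_X ℝ j).C_mul (v j)

theorem sum_smul_ιn_single (v : EuclideanSpace ℝ (Fin n)) :
    ∑ j, v j • ιn n (EuclideanSpace.single j 1) = ιn n v := by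
  conv_rhs => rw [← (EuclideanSpace.basisFun (Fin n) ℝ).sum_repr v]
  simp [map_sum, map_smul]

theorem evalP_substMul (f : Fin n → MvPolynomial (Fin n) ℝ) (b : Cl n) (p : PolyC n)
    {u x : EuclideanSpace ℝ (Fin n)} (hx : ∀ i, aeval (fun j => u j) (f i) = x i) :
    evalP (substMul f b p) u = b * evalP p x := by
  induction p using Finsupp.induction_linear with
  | zero => simp [evalP]
  | add p p' hp hp' => rw [map_add, evalP_add, evalP_add, hp, hp', mul_add]
  | single m c =>
    rw [single_eq_polySMul (R := ℝ), substMul_polySMul, evalP_polySMul, evalP_polySMul,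
      aeval_bind₁, funext hx, mul_smul_comm]

theorem isHomogP_substMul {k : ℕ} {f : Fin n → MvPolynomial (Fin n) ℝ}
    (hf : ∀ i, (f i).IsHomogeneous 1) (b : Cl n) {p : PolyC n} (hp : IsHomogP k p) :
    IsHomogP k (substMul f b p) := by
  rw [substMul, Finsupp.lsum_apply, isHomogP_iff_mem_supported]
  refine Submodule.finsuppSum_mem _ _ _ _ fun m hm => isHomogP_polySMul ?_ _
  rw [← hp m (Finsupp.mem_support_iff.2 hm), ← one_mul (m.sum _)]
  exact (isHomogeneous_monomial 1 rfl).aeval f hf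

section DiracSubstitution

variable {b : Cl n} {V : Fin n → EuclideanSpace ℝ (Fin n)} {ε : ℝ}

/-- The chain rule turns `∑ⱼ eⱼ ∂ⱼ` after the substitution `xᵢ = ⟪V i, u⟫` into
`∑ᵢ ι(V i) ∂ᵢ`, and `hb` moves `ι(V i)` past `b`. -/
theorem diracP_substMul_polySMul
    (hb : ∀ i, ιn n (V i) * b = ε • (b * ιn n (EuclideanSpace.single i 1)))
    (q : MvPolynomial (Fin n) ℝ) (c : Cl n) :
    diracP (substMul (fun i => linPoly (V i)) b (polySMul q c)) =
      ε • substMul (fun i => linPoly (V i)) b (diracP (polySMul q c)) := by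
  set f := fun i => linPoly (V i)
  set e : Fin n → Cl n := fun j => ιn n (EuclideanSpace.single j 1)
  calc diracP (substMul f b (polySMul q c))
      = ∑ j, ∑ i, polySMul (bind₁ f (pderiv i q)) (V i j • (e j * (b * c))) := by
        simp only [substMul_polySMul, diracP_polySMul, pderiv_bind₁, f, e, pderiv_linPoly,
          map_sum, LinearMap.sum_apply, polySMul_C_mul]
    _ = ∑ i, polySMul (bind₁ f (pderiv i q)) ((∑ j, V i j • e j) * (b * c)) := by
        rw [Finset.sum_comm]
        simp only [Finset.sum_mul, smul_mul_assoc, map_sum]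
    _ = ε • substMul f b (diracP (polySMul q c)) := by
        simp only [e, sum_smul_ιn_single, ← mul_assoc, hb, diracP_polySMul, map_sum,
          substMul_polySMul, Finset.smul_sum, smul_mul_assoc, map_smul]

theorem diracP_substMul
    (hb : ∀ i, ιn n (V i) * b = ε • (b * ιn n (EuclideanSpace.single i 1))) (p : PolyC n) :
    diracP (substMul (fun i => linPoly (V i)) b p) =
      ε • substMul (fun i => linPoly (V i)) b (diracP p) := by
  induction p using Finsupp.induction_linear with
  | zero => rw [map_zero, diracP_zero, map_zero, smul_zero]
  | add p p' hp hp' => rw [map_add, diracP_add, diracP_add, hp, hp', map_add, smul_add]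
  | single m c => rw [single_eq_polySMul (R := ℝ), diracP_substMul_polySMul hb]

end DiracSubstitution

theorem IsMonogenicPoly.mul_comp {k : ℕ} {b : Cl n}
    {O : EuclideanSpace ℝ (Fin n) ≃ₗᵢ[ℝ] EuclideanSpace ℝ (Fin n)} {ε : ℝ}
    (hb : ∀ v, ιn n (O.symm v) * b = ε • (b * ιn n v))
    {g : EuclideanSpace ℝ (Fin n) → Cl n} (hg : IsMonogenicPoly n k g) :
    IsMonogenicPoly n k fun u => b * g (O u) := by
  obtain ⟨p, rfl, hDp, hp⟩ := hg
  have hcoord : ∀ u i, aeval (fun j => u j) (linPoly (O.symm (EuclideanSpace.single i 1)))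
      = O u i := fun u i => by
    rw [aeval_linPoly, LinearIsometryEquiv.inner_map_eq_flip, O.symm_symm,
      EuclideanSpace.inner_single_left, map_one, one_mul]
  refine ⟨substMul (fun i => linPoly (O.symm (EuclideanSpace.single i 1))) b p,
    funext fun u => (evalP_substMul _ b p (hcoord u)).symm, ?_,
    isHomogP_substMul (fun _ => isHomogeneous_linPoly _) b hp⟩
  rw [diracP_substMul (fun i => hb _), hDp, map_zero, smul_zero]

theorem Qn_eq_neg_one {y : EuclideanSpace ℝ (Fin n)} (hy : ‖y‖ = 1) : Qn n y = -1 := by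
  simp [Qn, LinearMap.BilinMap.toQuadraticMap_apply, hy]

theorem IsPin.exists_mul_reverse {a : Cl n} (ha : IsPin n a) :
    ∃ ε : ℝ, ε * ε = 1 ∧
      a * reverse a = algebraMap ℝ _ ε ∧ reverse a * a = algebraMap ℝ _ ε := by
  obtain ⟨l, hl, rfl⟩ := ha
  have hQ : (l.map (Qn n)).prod = (-1) ^ l.length := by
    rw [List.map_congr_left fun y hy => Qn_eq_neg_one (hl y hy), List.map_const',
      List.prod_replicate]
  exact ⟨(-1) ^ l.length, by rw [← mul_pow, neg_one_mul, neg_neg, one_pow],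
    hQ ▸ prod_map_ι_mul_reverse l, hQ ▸ reverse_mul_prod_map_ι l⟩

section PinConjugation

variable {a : Cl n} {O : EuclideanSpace ℝ (Fin n) ≃ₗᵢ[ℝ] EuclideanSpace ℝ (Fin n)} {ε : ℝ}

theorem ιn_symm_mul_reverse (hε : ε * ε = 1) (hRa : reverse a * a = algebraMap ℝ _ ε)
    (hO : ∀ w, a * ιn n w * reverse a = ιn n (O w)) (v : EuclideanSpace ℝ (Fin n)) :
    ιn n (O.symm v) * reverse a = ε • (reverse a * ιn n v) := by
  rw [← O.apply_symm_apply v, ← hO, O.symm_apply_apply, ← mul_assoc, ← mul_assoc, hRa,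
    ← Algebra.smul_def, smul_mul_assoc, smul_smul, hε, one_smul]

theorem ιn_mul_smul (hRa : reverse a * a = algebraMap ℝ _ ε)
    (hO : ∀ w, a * ιn n w * reverse a = ιn n (O w)) (v : EuclideanSpace ℝ (Fin n)) :
    ιn n (O v) * (ε • a) = ε • ((ε • a) * ιn n v) := by
  rw [mul_smul_comm, ← hO, mul_assoc, hRa, ← Algebra.commutes, ← Algebra.smul_def,
    smul_mul_assoc]

end PinConjugation

end Monogenic

/-- If `g ∈ M_k` and `a ∈ Pin(n)` (with associated rotation `O`, `a (ι u) ã = ι (O u)`),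
then `u ↦ ã g(a u ã)` is again a left monogenic polynomial homogeneous of degree `k`;
moreover `l_ã : M_k → M_k` is a right-`Cl_n`-linear bijection. -/
theorem stmt16 (n k : ℕ) (a : Cl n) (ha : IsPin n a)
    (O : EuclideanSpace ℝ (Fin n) ≃ₗᵢ[ℝ] EuclideanSpace ℝ (Fin n))
    (hO : ∀ w, a * ιn n w * CliffordAlgebra.reverse a = ιn n (O w)) :
    (∀ g : EuclideanSpace ℝ (Fin n) → Cl n, IsMonogenicPoly n k g →
      IsMonogenicPoly n k (fun u => CliffordAlgebra.reverse a * g (O u))) ∧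
    (∀ h : EuclideanSpace ℝ (Fin n) → Cl n, IsMonogenicPoly n k h →
      ∃! g : EuclideanSpace ℝ (Fin n) → Cl n,
        IsMonogenicPoly n k g ∧
          ∀ u, h u = CliffordAlgebra.reverse a * g (O u)) ∧
    (∀ g : EuclideanSpace ℝ (Fin n) → Cl n, ∀ c : Cl n,
      (fun u => CliffordAlgebra.reverse a * (g (O u) * c))
        = fun u => (CliffordAlgebra.reverse a * g (O u)) * c) := by
  obtain ⟨ε, hε, haR, hRa⟩ := ha.exists_mul_reverse
  have hinvR : (ε • a) * reverse a = 1 := by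
    rw [smul_mul_assoc, haR, Algebra.smul_def, ← map_mul, hε, map_one]
  have hinvL : reverse a * (ε • a) = 1 := by
    rw [mul_smul_comm, hRa, Algebra.smul_def, ← map_mul, hε, map_one]
  refine ⟨fun g hg => hg.mul_comp (ιn_symm_mul_reverse hε hRa hO), fun h hh => ?_,
    fun g c => funext fun u => (mul_assoc _ _ _).symm⟩
  refine ⟨fun u => (ε • a) * h (O.symm u),
    ⟨hh.mul_comp (O := O.symm) (ιn_mul_smul hRa hO), fun u => ?_⟩, ?_⟩
  · beta_reduce
    rw [O.symm_apply_apply, ← mul_assoc, hinvL, one_mul]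
  · rintro g ⟨-, hg⟩
    funext v
    rw [hg, O.apply_symm_apply, ← mul_assoc, hinvR, one_mul]
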